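/- (Lemma 1) Fix 0 < d < min(φ_max, ψ_max) and constants β, γ, s_in > 0. Then the function α ↦ f_0*(α,d) = d·(v_in*(α,d) − ψ⁻¹(d))/μ⁻¹(d) is strictly concave on the interval (0, 1 − d/φ_max). -/

import Mathlib

/-- The inverse of the Monod function `φ` on `[0, φmax)`: `φ⁻¹(y) = ks·y/(φmax−y)`. -/
noncomputable def phiInv (phimax ks y : ℝ) : ℝ := ks * y / (phimax - y)

/-- The inverse of `μ` on `[0, μmax)`: `μ⁻¹(y) = qmin·μmax/(μmax − y)`. -/
noncomputable def muInv (mumax qmin y : ℝ) : ℝ := qmin * mumax / (mumax - y)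

/-- `ψmax = μmax·ρmax/(ρmax + qmin·μmax)`. -/
noncomputable def psiMax (rhomax mumax qmin : ℝ) : ℝ :=
  mumax * rhomax / (rhomax + qmin * mumax)

/-- `k_c = kv·qmin·μmax/(ρmax + qmin·μmax)`. -/
noncomputable def kC (rhomax kv mumax qmin : ℝ) : ℝ :=
  kv * qmin * mumax / (rhomax + qmin * mumax)

/-- The inverse of `ψ` on `[0, ψmax)`: `ψ⁻¹(y) = k_c·y/(ψmax − y)`. -/
noncomputable def psiInv (rhomax kv mumax qmin y : ℝ) : ℝ :=
  kC rhomax kv mumax qmin * y / (psiMax rhomax mumax qmin - y)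

lemma aux_strictConcave (a b c A B C : ℝ) (hb : 0 < b) (hC : 0 < C) (hca : b * c ≤ a) :
    StrictConcaveOn ℝ (Set.Ioo 0 c) (fun x => A * x + B - C * (a - b * x)⁻¹) := by
  refine ⟨convex_Ioo 0 c, ?_⟩
  intro x hx y hy hxy t u ht hu htu
  have hpx : 0 < a - b * x := by nlinarith [hx.1, hx.2]
  have hpy : 0 < a - b * y := by nlinarith [hy.1, hy.2]
  have hne : a - b * x ≠ a - b * y := by
    intro h; apply hxy; nlinarith
  have key := (strictConvexOn_zpow (m := -1) (by norm_num) (by norm_num)).2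
    (Set.mem_Ioi.mpr hpx) (Set.mem_Ioi.mpr hpy) hne ht hu htu
  simp only [smul_eq_mul, zpow_neg_one] at key ⊢
  have hcomb : a - b * (t * x + u * y) = t * (a - b * x) + u * (a - b * y) := by
    linear_combination (-a) * htu
  rw [hcomb]
  have haff : t * (A * x + B) + u * (A * y + B) = A * (t * x + u * y) + B := by
    linear_combination B * htu
  nlinarith [mul_lt_mul_of_pos_left key hC, haff]

/-- (Lemma 1) Fix `0 < d < min(φmax, ψmax)` and `β, γ, s_in > 0`. Then
`α ↦ f_0*(α,d) = d·(v_in*(α,d) − ψ⁻¹(d))/μ⁻¹(d)` is strictly concave on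
`(0, 1 − d/φmax)`, where `v_in*(α,d) = α·β·γ·(s_in − φ⁻¹(d/(1−α)))`. -/
theorem f0_strictly_concave_in_alpha (phimax ks rhomax kv mumax qmin beta gamma sIn d : ℝ)
    (hphimax : 0 < phimax) (hks : 0 < ks) (hrho : 0 < rhomax) (hkv : 0 < kv)
    (hmu : 0 < mumax) (hqmin : 0 < qmin) (hbeta : 0 < beta) (hgamma : 0 < gamma)
    (hsIn : 0 < sIn) (hd0 : 0 < d)
    (hd : d < min phimax (psiMax rhomax mumax qmin)) :
    StrictConcaveOn ℝ (Set.Ioo 0 (1 - d / phimax))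
      (fun alpha : ℝ =>
        d * (alpha * beta * gamma * (sIn - phiInv phimax ks (d / (1 - alpha)))
              - psiInv rhomax kv mumax qmin d) / muInv mumax qmin d) := by
  have hdp : d < phimax := lt_of_lt_of_le hd (min_le_left _ _)
  have hdpsi : d < psiMax rhomax mumax qmin := lt_of_lt_of_le hd (min_le_right _ _)
  have hdenpos : 0 < rhomax + qmin * mumax := by positivity
  have hpsiltmu : psiMax rhomax mumax qmin < mumax := by
    rw [psiMax, div_lt_iff₀ hdenpos]
    nlinarith [mul_pos hmu (mul_pos hqmin hmu)]
  have hdmu : d < mumax := hdpsi.trans hpsiltmu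
  set M : ℝ := muInv mumax qmin d with hM
  have hMpos : 0 < M := by
    rw [hM, muInv]
    have : 0 < mumax - d := by linarith
    positivity
  set P : ℝ := psiInv rhomax kv mumax qmin d with hP
  have hC : 0 < d * beta * gamma * ks * d * (phimax - d) / (phimax * M) := by
    have : 0 < phimax - d := by linarith
    positivity
  refine (aux_strictConcave (phimax - d) phimax (1 - d / phimax)
      (d * beta * gamma * sIn / M)
      (d * (beta * gamma * ks * d / phimax - P) / M)
      (d * beta * gamma * ks * d * (phimax - d) / (phimax * M))
      hphimax hC (by field_simp; exact le_rfl)).congr ?_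
  intro α hα
  obtain ⟨hα0, hα1⟩ := hα
  have hQ : 0 < phimax - d - phimax * α := by
    have h1 : (1 - d / phimax) * phimax = phimax - d := by field_simp
    nlinarith [mul_lt_mul_of_pos_right hα1 hphimax]
  have hα1' : α < 1 := by
    have : 0 < d / phimax := by positivity
    linarith
  have h1a : (0:ℝ) < 1 - α := by linarith
  have hdeq : phimax - d / (1 - α) = (phimax - d - phimax * α) / (1 - α) := by
    field_simp; ring
  have hden : phimax - d / (1 - α) ≠ 0 := by
    rw [hdeq]; positivity
  simp only [phiInv]
  rw [hdeq]
  field_simp [hQ.ne']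
  have hX : -(α * phimax) + phimax - d ≠ 0 := ne_of_gt (by linarith)
  linear_combination (-(beta * gamma * d * ks)) * mul_inv_cancel₀ hX
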